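/- Let ι be a finite index type, ε : ι → Bool, σ a permutation of ι × Fin 2, and τ : ι × Fin 2 → Bool, and let (ε̂, σ̂) on ι × Bool be the double covering of this twisted Gauss data. Then, under the natural reindexing (i,s,μ) ↔ ((i,s),μ) of ι × Bool × Fin 2 with (ι × Bool) × Fin 2: (1) the twisted block-diagonal matrix M̃ of (ε,σ,τ) equals the block-diagonal matrix M of the virtual Gauss data (ε̂,σ̂); and (2) the twisted 0–1 matrix P̃ of (ε,σ,τ) equals the permutation matrix P of σ̂, i.e. P̃_{(i,s,μ),(j,t,λ)} = 1 iff σ̂((j,t),λ) = ((i,s),μ), and is 0 otherwise. -/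
import Mathlib


/-! JKSS matrices of virtual Gauss data, twisted JKSS matrices of twisted
Gauss data, and the double covering of twisted Gauss data. -/

/-- The 2×2 matrix `M₊` attached to a positive crossing. -/
def Mplus {R : Type*} [CommRing R] (x y : Rˣ) : Matrix (Fin 2) (Fin 2) R :=
  !![1 - (x : R), -(y : R); -((x * y⁻¹ : Rˣ) : R), 0]

/-- The 2×2 matrix `M₋` attached to a negative crossing. -/
def Mminus {R : Type*} [CommRing R] (x y : Rˣ) : Matrix (Fin 2) (Fin 2) R :=
  !![0, -((x⁻¹ * y : Rˣ) : R); -((y⁻¹ : Rˣ) : R), 1 - ((x⁻¹ : Rˣ) : R)]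

/-- The 2×2 matrix attached to a crossing of sign `b` (`true` = positive). -/
def crossMat {R : Type*} [CommRing R] (x y : Rˣ) (b : Bool) :
    Matrix (Fin 2) (Fin 2) R :=
  if b then Mplus x y else Mminus x y

/-- The block diagonal JKSS matrix `M` of virtual Gauss data with sign
function `ε`. -/
def jkssM {R : Type*} [CommRing R] (x y : Rˣ) {ι : Type*} [DecidableEq ι]
    (ε : ι → Bool) : Matrix (ι × Fin 2) (ι × Fin 2) R :=
  fun p q => if p.1 = q.1 then crossMat x y (ε p.1) p.2 q.2 else 0

/-- The 0–1 permutation matrix `P` of the permutation `σ` of a virtual Gauss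
datum: the `(p, q)` entry is `1` iff `σ q = p`. -/
def jkssP {R : Type*} [CommRing R] {ι : Type*} [DecidableEq ι]
    (σ : Equiv.Perm (ι × Fin 2)) : Matrix (ι × Fin 2) (ι × Fin 2) R :=
  fun p q => if σ q = p then 1 else 0

/-- The twisted block diagonal JKSS matrix `M̃` of twisted Gauss data with
sign function `ε`, indexed by `ι × Bool × Fin 2`. -/
def twistM {R : Type*} [CommRing R] (x y : Rˣ) {ι : Type*} [DecidableEq ι]
    (ε : ι → Bool) : Matrix (ι × Bool × Fin 2) (ι × Bool × Fin 2) R :=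
  fun p q =>
    if p.1 = q.1 ∧ p.2.1 = q.2.1 then crossMat x y (ε p.1) p.2.2 q.2.2 else 0

/-- The twisted 0–1 JKSS matrix `P̃` of twisted Gauss data `(ε, σ, τ)`. -/
def twistP {R : Type*} [CommRing R] {ι : Type*} [DecidableEq ι]
    (σ : Equiv.Perm (ι × Fin 2)) (τ : ι × Fin 2 → Bool) :
    Matrix (ι × Bool × Fin 2) (ι × Bool × Fin 2) R :=
  fun p q =>
    if (p.2.1 = false ∧ q.2.1 = false ∧ τ (q.1, q.2.2) = false ∧
          σ (q.1, q.2.2) = (p.1, p.2.2)) ∨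
       (p.2.1 = true ∧ q.2.1 = true ∧ τ (q.1, 1 - q.2.2) = false ∧
          σ (q.1, 1 - q.2.2) = (p.1, 1 - p.2.2)) ∨
       (p.2.1 = false ∧ q.2.1 = true ∧ τ (q.1, 1 - q.2.2) = true ∧
          σ (q.1, 1 - q.2.2) = (p.1, p.2.2)) ∨
       (p.2.1 = true ∧ q.2.1 = false ∧ τ (q.1, q.2.2) = true ∧
          σ (q.1, q.2.2) = (p.1, 1 - p.2.2))
    then 1 else 0

/-- The double covering map on abstract twisted Gauss data.
For input `((j,s),κ)`: set `λ = κ` if `s = false` and `λ = 1 − κ` if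
`s = true`; let `(i,μ) = σ (j,λ)` and `s' = xor s (τ (j,λ))`; then the
result is `((i,s'),μ)` if `s' = false` and `((i,s'),1−μ)` if `s' = true`. -/
def coverFun {ι : Type*} (σ : Equiv.Perm (ι × Fin 2)) (τ : ι × Fin 2 → Bool) :
    (ι × Bool) × Fin 2 → (ι × Bool) × Fin 2 := fun p =>
  let j : ι := p.1.1
  let s : Bool := p.1.2
  let lam : Fin 2 := if s then 1 - p.2 else p.2
  let i : ι := (σ (j, lam)).1
  let mu : Fin 2 := (σ (j, lam)).2
  let s' : Bool := xor s (τ (j, lam))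
  ((i, s'), if s' then 1 - mu else mu)

/-- The permutation flipping the `Fin 2` coordinate exactly on the second
sheet. -/
def flipPerm {ι : Type*} : Equiv.Perm ((ι × Bool) × Fin 2) :=
  Function.Involutive.toPerm
    (fun p => (p.1, if p.1.2 then 1 - p.2 else p.2)) (by
      rintro ⟨⟨j, s⟩, κ⟩
      cases s <;> simp)

/-- Reshuffling of coordinates. -/
def reindexE {ι : Type*} : (ι × Bool) × Fin 2 ≃ (ι × Fin 2) × Bool where
  toFun p := ((p.1.1, p.2), p.1.2)
  invFun q := ((q.1.1, q.2), q.1.2)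
  left_inv _ := rfl
  right_inv _ := rfl

/-- The permutation switching sheets along edges with odd bar parity. -/
def xorPerm {ι : Type*} (τ : ι × Fin 2 → Bool) :
    Equiv.Perm ((ι × Fin 2) × Bool) :=
  Function.Involutive.toPerm (fun q => (q.1, xor q.2 (τ q.1))) (by
    rintro ⟨e, s⟩
    cases h : τ e <;> simp [h])

/-- The double covering map, assembled as a composition of permutations. -/
def coverAux {ι : Type*} (σ : Equiv.Perm (ι × Fin 2)) (τ : ι × Fin 2 → Bool) :
    Equiv.Perm ((ι × Bool) × Fin 2) :=
  flipPerm.trans <| reindexE.trans <| (xorPerm τ).trans <|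
    (σ.prodCongr (Equiv.refl Bool)).trans <| reindexE.symm.trans flipPerm

lemma coverFun_eq_coverAux {ι : Type*} (σ : Equiv.Perm (ι × Fin 2))
    (τ : ι × Fin 2 → Bool) : coverFun σ τ = ⇑(coverAux σ τ) :=
  funext fun _ => rfl

/-- The permutation `σ̂` of the double covering of the twisted Gauss data
`(ε, σ, τ)`; its underlying function is `coverFun σ τ`. -/
noncomputable def coverPerm {ι : Type*} (σ : Equiv.Perm (ι × Fin 2))
    (τ : ι × Fin 2 → Bool) : Equiv.Perm ((ι × Bool) × Fin 2) :=
  Equiv.ofBijective (coverFun σ τ)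
    (coverFun_eq_coverAux σ τ ▸ (coverAux σ τ).bijective)

lemma fin2_sub_eq_zero (c : Fin 2) : 1 - c = 0 ↔ c = 1 := by
  fin_cases c <;> decide

lemma fin2_sub_eq_one (c : Fin 2) : 1 - c = 1 ↔ c = 0 := by
  fin_cases c <;> decide

/-- Under the natural reindexing `(i,s,μ) ↔ ((i,s),μ)`, the twisted JKSS
matrices `M̃`, `P̃` of twisted Gauss data `(ε, σ, τ)` coincide with the JKSS
matrices `M`, `P` of its double covering `(ε̂, σ̂)`, where
`ε̂ (i,s) = ε i` and `σ̂ = coverPerm σ τ`. -/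
theorem twisted_jkss_eq_cover_jkss {R : Type*} [CommRing R] (x y : Rˣ)
    {ι : Type*} [Fintype ι] [DecidableEq ι] (ε : ι → Bool)
    (σ : Equiv.Perm (ι × Fin 2)) (τ : ι × Fin 2 → Bool) :
    (∀ (i j : ι) (s t : Bool) (μ lam : Fin 2),
        twistM x y ε (i, s, μ) (j, t, lam) =
          jkssM x y (fun p : ι × Bool => ε p.1) ((i, s), μ) ((j, t), lam)) ∧
    (∀ (i j : ι) (s t : Bool) (μ lam : Fin 2),
        twistP (R := R) σ τ (i, s, μ) (j, t, lam) =
          jkssP (coverPerm σ τ) ((i, s), μ) ((j, t), lam)) := by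
  constructor
  · intro i j s t μ lam
    simp [twistM, jkssM, Prod.ext_iff]
  · intro i j s t μ lam
    have hc : coverPerm σ τ ((j, t), lam) = coverFun σ τ ((j, t), lam) := rfl
    simp only [twistP, jkssP, hc]
    rcases t with _ | _ <;> rcases s with _ | _ <;>
      fin_cases μ <;> fin_cases lam <;>
        simp only [coverFun] <;>
        cases h : τ (j, 0) <;> cases h' : τ (j, 1) <;>
          simp [h, h', Prod.ext_iff, fin2_sub_eq_zero, fin2_sub_eq_one]
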